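/- arXiv:1306.6708 — 3 statements merged into one kernel-verified Lean document; each statement's English description precedes it below -/
import Mathlib

section
/- Let R and S be associative unital rings (not necessarily commutative). If P and P' are (S,R)-bimodules such that the functors P ⊗_R (−) and P' ⊗_R (−) : ModuleCat R ⥤ ModuleCat S are naturally isomorphic, then P and P' are isomorphic as (S,R)-bimodules, i.e. there is an additive bijection P → P' commuting with both the left S-action and the right R-action. (Uniqueness clause of the Eilenberg–Watts theorem, Theorem 8.1 of the paper.) -/
/-!
Evaluating a natural isomorphism `P ⊗_R (−) ≅ P' ⊗_R (−)` at the regular module `R` gives an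
`S`-linear isomorphism `P ≅ P ⊗_R R ≅ P' ⊗_R R ≅ P'`. Under `P ≅ P ⊗_R R`, the right action of
`r` is the functor applied to right multiplication by `r`, which is a morphism of left
`R`-modules `R → R`; naturality therefore makes the isomorphism commute with the right action.
-/

open TensorProduct CategoryTheory CategoryTheory.Limits MulOpposite

noncomputable section

variable (R S : Type) [Ring R] [Ring S]

section Tensor


variable (P : Type) [AddCommGroup P] [Module S P] [Module Rᵐᵒᵖ P] [SMulCommClass S Rᵐᵒᵖ P]

def relSet (N : Type) [AddCommGroup N] [Module R N] : Set (P ⊗[ℤ] N) :=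
  {z | ∃ (p : P) (r : R) (n : N), z = ((op r • p) ⊗ₜ[ℤ] n) - (p ⊗ₜ[ℤ] (r • n))}

def relSub (N : Type) [AddCommGroup N] [Module R N] : Submodule S (P ⊗[ℤ] N) where
  carrier := AddSubgroup.closure (relSet R P N)
  add_mem' := AddSubgroup.add_mem _
  zero_mem' := AddSubgroup.zero_mem _
  smul_mem' := by
    intro s x hx
    simp only [SetLike.mem_coe] at hx ⊢
    induction hx using AddSubgroup.closure_induction with
    | mem z hz =>
      obtain ⟨p, r, n, rfl⟩ := hz
      refine AddSubgroup.subset_closure ⟨s • p, r, n, ?_⟩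
      rw [smul_sub, smul_tmul', smul_tmul', smul_comm]
    | zero => simpa using AddSubgroup.zero_mem _
    | add a b _ _ ha hb => rw [smul_add]; exact AddSubgroup.add_mem _ ha hb
    | neg a _ ha => rw [smul_neg]; exact AddSubgroup.neg_mem _ ha

/-- `id_P ⊗ f` on the `ℤ`-tensor products, as an `S`-linear map. -/
def mapAux {N N' : Type} [AddCommGroup N] [Module R N] [AddCommGroup N'] [Module R N']
    (f : N →ₗ[R] N') : P ⊗[ℤ] N →ₗ[S] P ⊗[ℤ] N' :=
  TensorProduct.AlgebraTensorModule.map (LinearMap.id : P →ₗ[S] P)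
    f.toAddMonoidHom.toIntLinearMap

theorem mapAux_mem {N N' : Type} [AddCommGroup N] [Module R N] [AddCommGroup N']
    [Module R N'] (f : N →ₗ[R] N') :
    ∀ x ∈ AddSubgroup.closure (relSet R P N),
      mapAux R S P f x ∈ AddSubgroup.closure (relSet R P N') := by
  intro x hx
  induction hx using AddSubgroup.closure_induction with
  | mem z hz =>
    obtain ⟨p, r, n, rfl⟩ := hz
    refine AddSubgroup.subset_closure ⟨p, r, f n, ?_⟩
    rw [map_sub]
    simp [mapAux]
  | zero => simpa using AddSubgroup.zero_mem _
  | add a b _ _ ha hb => rw [map_add]; exact AddSubgroup.add_mem _ ha hb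
  | neg a _ ha => rw [map_neg]; exact AddSubgroup.neg_mem _ ha

theorem relSub_le_comap {N N' : Type} [AddCommGroup N] [Module R N] [AddCommGroup N']
    [Module R N'] (f : N →ₗ[R] N') :
    relSub R S P N ≤ (relSub R S P N').comap (mapAux R S P f) :=
  fun x hx => mapAux_mem R S P f x hx

/-- The functor `P ⊗_R (−) : ModuleCat R ⥤ ModuleCat S` for an `(S,R)`-bimodule `P`. -/
def tensorFunctor : ModuleCat R ⥤ ModuleCat S where
  obj N := ModuleCat.of S ((P ⊗[ℤ] N) ⧸ relSub R S P N)
  map {N N'} f := ModuleCat.ofHom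
    (Submodule.mapQ _ _ (mapAux R S P f.hom) (relSub_le_comap R S P f.hom))
  map_id N := by
    apply ModuleCat.hom_ext
    apply Submodule.linearMap_qext
    apply LinearMap.restrictScalars_injective ℤ
    apply TensorProduct.ext'
    intro p n
    simp only [LinearMap.restrictScalars_apply, LinearMap.comp_apply, Submodule.mkQ_apply]
    rfl
  map_comp {N N' N''} f g := by
    apply ModuleCat.hom_ext
    apply Submodule.linearMap_qext
    apply LinearMap.restrictScalars_injective ℤ
    apply TensorProduct.ext'
    intro p n
    simp only [LinearMap.restrictScalars_apply, LinearMap.comp_apply, Submodule.mkQ_apply,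
      ModuleCat.hom_comp]
    rfl

end Tensor

section RightUnitor

variable (P : Type) [AddCommGroup P] [Module S P] [Module Rᵐᵒᵖ P] [SMulCommClass S Rᵐᵒᵖ P]

theorem relSub_le_iff {N : Type} [AddCommGroup N] [Module R N] {p : Submodule S (P ⊗[ℤ] N)} :
    relSub R S P N ≤ p ↔ relSet R P N ⊆ p :=
  AddSubgroup.closure_le p.toAddSubgroup

theorem op_smul_tmul_sub_tmul_smul_mem_relSub {N : Type} [AddCommGroup N] [Module R N]
    (p : P) (r : R) (n : N) : (op r • p) ⊗ₜ[ℤ] n - p ⊗ₜ[ℤ] (r • n) ∈ relSub R S P N :=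
  AddSubgroup.subset_closure ⟨p, r, n, rfl⟩

def rightActionLift : P ⊗[ℤ] R →ₗ[S] P :=
  TensorProduct.AlgebraTensorModule.lift <| LinearMap.mk₂' S ℤ (fun p r => op r • p)
    (fun _ _ _ => smul_add _ _ _) (fun s p r => (smul_comm s (op r) p).symm)
    (fun _ _ _ => by rw [MulOpposite.op_add, add_smul])
    (fun _ _ _ => by rw [op_smul, smul_assoc])

def tensorRid : P ≃ₗ[S] (P ⊗[ℤ] R) ⧸ relSub R S P R where
  toFun p := Submodule.Quotient.mk (p ⊗ₜ[ℤ] (1 : R))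
  map_add' p q := by rw [add_tmul, Submodule.Quotient.mk_add]
  map_smul' s p := by rw [RingHom.id_apply, ← Submodule.Quotient.mk_smul, smul_tmul']
  invFun := Submodule.liftQ _ (rightActionLift R S P) <| (relSub_le_iff R S P).2 <| by
    rintro _ ⟨p, r, n, rfl⟩
    simp [rightActionLift, op_mul, mul_smul]
  left_inv p := by simp [rightActionLift]
  right_inv x := by
    obtain ⟨y, rfl⟩ := Submodule.Quotient.mk_surjective _ x
    induction y with
    | zero => simp
    | tmul p r =>
      simpa [rightActionLift, Submodule.Quotient.eq] using
        op_smul_tmul_sub_tmul_smul_mem_relSub R S P p r (1 : R)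
    | add a b ha hb =>
      dsimp only at ha hb ⊢
      rw [Submodule.Quotient.mk_add, map_add, add_tmul, Submodule.Quotient.mk_add, ha, hb]

def tensorRidIso : ModuleCat.of S P ≅ (tensorFunctor R S P).obj (ModuleCat.of R R) :=
  (tensorRid R S P).toModuleIso

theorem tensorFunctor_map_toSpanSingleton_tensorRidIso (r : R) (p : P) :
    (tensorFunctor R S P).map (ModuleCat.ofHom (LinearMap.toSpanSingleton R R r))
      ((tensorRidIso R S P).hom p) = (tensorRidIso R S P).hom (op r • p) := by
  refine ((Submodule.Quotient.eq _).2 ?_).symm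
  simpa [tensorRidIso, tensorRid, mapAux] using
    op_smul_tmul_sub_tmul_smul_mem_relSub R S P p r (1 : R)

end RightUnitor

theorem tensorRidIso_inv_app_op_smul {P P' : Type}
    [AddCommGroup P] [Module S P] [Module Rᵐᵒᵖ P] [SMulCommClass S Rᵐᵒᵖ P]
    [AddCommGroup P'] [Module S P'] [Module Rᵐᵒᵖ P'] [SMulCommClass S Rᵐᵒᵖ P']
    (α : tensorFunctor R S P ⟶ tensorFunctor R S P') (r : R) (p : P) :
    (tensorRidIso R S P').inv (α.app _ ((tensorRidIso R S P).hom (op r • p))) =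
      op r • (tensorRidIso R S P').inv (α.app _ ((tensorRidIso R S P).hom p)) := by
  obtain ⟨q, hq⟩ : ∃ q, (tensorRidIso R S P').hom q = α.app _ ((tensorRidIso R S P).hom p) :=
    ⟨_, Iso.inv_hom_id_apply _ _⟩
  rw [← tensorFunctor_map_toSpanSingleton_tensorRidIso, NatTrans.naturality_apply, ← hq,
    tensorFunctor_map_toSpanSingleton_tensorRidIso, Iso.hom_inv_id_apply, Iso.hom_inv_id_apply]

/-- **Uniqueness in the Eilenberg–Watts theorem.**  If `P` and `P'` are `(S,R)`-bimodules
such that the functors `P ⊗_R (−)` and `P' ⊗_R (−) : ModuleCat R ⥤ ModuleCat S` are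
naturally isomorphic, then `P` and `P'` are isomorphic as `(S,R)`-bimodules: there is an
additive bijection `P → P'` commuting with both the left `S`-action and the right
`R`-action. -/
theorem eilenberg_watts_unique (P P' : Type)
    [AddCommGroup P] [Module S P] [Module Rᵐᵒᵖ P] [SMulCommClass S Rᵐᵒᵖ P]
    [AddCommGroup P'] [Module S P'] [Module Rᵐᵒᵖ P'] [SMulCommClass S Rᵐᵒᵖ P']
    (h : Nonempty (tensorFunctor R S P ≅ tensorFunctor R S P')) :
    ∃ e : P ≃+ P',
      (∀ (s : S) (p : P), e (s • p) = s • e p) ∧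
      (∀ (r : R) (p : P), e (op r • p) = op r • e p) := by
  obtain ⟨η⟩ := h
  let e : P ≃ₗ[S] P' := (tensorRidIso R S P ≪≫ η.app (ModuleCat.of R R) ≪≫
    (tensorRidIso R S P').symm).toLinearEquiv
  exact ⟨e.toAddEquiv, e.map_smul, tensorRidIso_inv_app_op_smul R S η.hom⟩
end
end

section
/- Fix k ≥ 1 and let M be a nonempty subset of EuclideanSpace ℝ (Fin k) (in the paper, the image of a closed manifold under an embedding into ℝ^k). For all natural numbers m, n and all v : Fin m → E, w : Fin n → E (with L² norms), the concatenation Fin.append v w : Fin (m+n) → E satisfies infDist(Fin.append v w, Δ_{m+n}(M)) ≥ max(infDist(v, Δ_m(M)), infDist(w, Δ_n(M))). Consequently, for every ε > 0 the closed ε-neighborhoods D(m) = {v : infDist(v, Δ_m(M)) ≤ ε} satisfy D(m+n) ⊆ D(m) × D(n) under the canonical identification (Fin (m+n) → E) ≅ (Fin m → E) × (Fin n → E). (The first displayed inclusion in the proof of Proposition 3.1, underlying the multiplication μ on M^{−TM}.) -/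
open Metric

noncomputable section

variable (k : ℕ)

/-- `ℝ^k`. -/
abbrev E (k : ℕ) := EuclideanSpace ℝ (Fin k)

/-- `(Fin m → ℝ^k)` with the `L²` norm. -/
abbrev mE (k m : ℕ) := PiLp 2 (fun _ : Fin m => E k)

/-- The diagonal map `Δ_m : E → (Fin m → E)`. -/
def diagL2 (m : ℕ) (v : E k) : mE k m :=
  (WithLp.equiv 2 (Fin m → E k)).symm (fun _ => v)

/-- The image `Δ_m(M)` of a set `M ⊆ E` under the diagonal map. -/
def diagSet (M : Set (E k)) (m : ℕ) : Set (mE k m) := (diagL2 k m) '' M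

/-- Concatenation `Fin.append v w : Fin (m+n) → E`, as a map of `L²` spaces. -/
def appendL2 {m n : ℕ} (v : mE k m) (w : mE k n) : mE k (m + n) :=
  (WithLp.equiv 2 (Fin (m + n) → E k)).symm
    (Fin.append (WithLp.equiv 2 (Fin m → E k) v) (WithLp.equiv 2 (Fin n → E k) w))

theorem Metric.infDist_image_le_infDist_image {γ α β : Type*} [PseudoMetricSpace α]
    [PseudoMetricSpace β] {f : γ → α} {g : γ → β} {s : Set γ} {a : α} {b : β}
    (h : ∀ x ∈ s, dist a (f x) ≤ dist b (g x)) :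
    infDist a (f '' s) ≤ infDist b (g '' s) := by
  rcases s.eq_empty_or_nonempty with rfl | hs
  · simp
  refine (le_infDist (hs.image g)).2 ?_
  rintro _ ⟨x, hx, rfl⟩
  exact (infDist_le_dist_of_mem (Set.mem_image_of_mem f hx)).trans (h x hx)

lemma dist_appendL2_sq {m n : ℕ} (v v' : mE k m) (w w' : mE k n) :
    dist (appendL2 k v w) (appendL2 k v' w') ^ 2 = dist v v' ^ 2 + dist w w' ^ 2 := by
  simp [PiLp.dist_sq_eq_of_L2, Fin.sum_univ_add, appendL2]

lemma dist_le_dist_appendL2_left {m n : ℕ} (v v' : mE k m) (w w' : mE k n) :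
    dist v v' ≤ dist (appendL2 k v w) (appendL2 k v' w') := by
  refine le_of_sq_le_sq ?_ dist_nonneg
  rw [dist_appendL2_sq]
  nlinarith [sq_nonneg (dist w w')]

lemma dist_le_dist_appendL2_right {m n : ℕ} (v v' : mE k m) (w w' : mE k n) :
    dist w w' ≤ dist (appendL2 k v w) (appendL2 k v' w') := by
  refine le_of_sq_le_sq ?_ dist_nonneg
  rw [dist_appendL2_sq]
  nlinarith [sq_nonneg (dist v v')]

lemma appendL2_diagL2 (m n : ℕ) (x : E k) :
    appendL2 k (diagL2 k m x) (diagL2 k n x) = diagL2 k (m + n) x := by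
  ext i : 1
  refine Fin.addCases (fun i => ?_) (fun i => ?_) i <;> simp [appendL2, diagL2]

lemma max_infDist_diagSet_le_infDist_appendL2 (M : Set (E k)) {m n : ℕ} (v : mE k m)
    (w : mE k n) :
    max (infDist v (diagSet k M m)) (infDist w (diagSet k M n)) ≤
      infDist (appendL2 k v w) (diagSet k M (m + n)) := by
  simp only [diagSet, ← appendL2_diagL2]
  exact max_le
    (infDist_image_le_infDist_image fun _ _ => dist_le_dist_appendL2_left k _ _ _ _)
    (infDist_image_le_infDist_image fun _ _ => dist_le_dist_appendL2_right k _ _ _ _)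

theorem infDist_append_ge_max (M : Set (E k)) :
    (∀ (m n : ℕ) (v : mE k m) (w : mE k n),
      infDist (appendL2 k v w) (diagSet k M (m + n)) ≥
        max (infDist v (diagSet k M m)) (infDist w (diagSet k M n))) ∧
    (∀ ε : ℝ, 0 < ε → ∀ (m n : ℕ) (v : mE k m) (w : mE k n),
      infDist (appendL2 k v w) (diagSet k M (m + n)) ≤ ε →
        infDist v (diagSet k M m) ≤ ε ∧ infDist w (diagSet k M n) ≤ ε) := by
  refine ⟨fun m n v w => max_infDist_diagSet_le_infDist_appendL2 k M v w,
    fun ε _ m n v w h => max_le_iff.1 ?_⟩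
  exact (max_infDist_diagSet_le_infDist_appendL2 k M v w).trans h

end
end

section
/- Let C be a symmetric monoidal category and k a natural number. Let T_k : C ⥤ C be the k-th tensor power functor, defined by T_0(X) = 𝟙_C (the monoidal unit), T_{j+1}(X) = T_j(X) ⊗ X, and correspondingly on morphisms (T_0(f) = id, T_{j+1}(f) = T_j(f) ⊗ f). Then T_k admits the structure of a strong symmetric monoidal functor: there are isomorphisms φ⁰ : 𝟙_C ≅ T_k(𝟙_C) and natural isomorphisms φ_{X,Y} : T_k(X) ⊗ T_k(Y) ≅ T_k(X ⊗ Y), built from the braiding, satisfying the coherence axioms for a monoidal functor and compatible with the braidings (a braided/symmetric monoidal functor structure). (The claim in Appendix A.1 of the paper that the k-th power functor i_k is strong symmetric monoidal.) -/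
open CategoryTheory MonoidalCategory

/-- The `k`-th tensor power functor `T_k : C ⥤ C`, defined by `T_0(X) = 𝟙_C`,
`T_{j+1}(X) = T_j(X) ⊗ X`, and correspondingly on morphisms. -/
def powFunctor (C : Type*) [Category C] [MonoidalCategory C] : ℕ → C ⥤ C
  | 0 =>
    { obj := fun _ => 𝟙_ C
      map := fun _ => 𝟙 (𝟙_ C) }
  | (j + 1) =>
    { obj := fun X => (powFunctor C j).obj X ⊗ X
      map := fun f => (powFunctor C j).map f ⊗ₘ f
      map_id := fun X => by simp
      map_comp := fun f g => by simp [tensorHom_comp_tensorHom] }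

/-!
`T_{j+1}` is the composite `C ⥤ C × C ⥤ C × C ⥤ C` of the diagonal, `T_j × 𝟭`, and `⊗`.
The first two are braided for formal reasons once `C × C` carries the componentwise braiding,
and `⊗` is braided precisely because `C` is symmetric: the interchange map `tensorμ` commutes
with the braidings. Induction on `k`, starting from the constant functor at `𝟙_ C`, finishes.
-/

namespace CategoryTheory

section Product

variable {C D C' D' : Type*} [Category C] [Category D] [Category C'] [Category D']
  [MonoidalCategory C] [MonoidalCategory D] [MonoidalCategory C'] [MonoidalCategory D']
  [BraidedCategory C] [BraidedCategory D]

instance BraidedCategory.prod : BraidedCategory (C × D) where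
  braiding X Y := (β_ X.1 Y.1).prod (β_ X.2 Y.2)
  braiding_naturality_right X _ _ f := by ext <;> simp
  braiding_naturality_left f X := by ext <;> simp
  hexagon_forward X Y Z := by ext <;> simp
  hexagon_reverse X Y Z := by ext <;> simp

@[simp] lemma prod_braiding_hom_fst (X Y : C × D) : (β_ X Y).hom.1 = (β_ X.1 Y.1).hom := rfl

@[simp] lemma prod_braiding_hom_snd (X Y : C × D) : (β_ X Y).hom.2 = (β_ X.2 Y.2).hom := rfl

instance Functor.Braided.diag : (Functor.diag C).Braided where
  braided X Y := by ext <;> simp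

instance Functor.Braided.prod [BraidedCategory C'] [BraidedCategory D'] (F : C ⥤ C')
    (G : D ⥤ D') [F.Braided] [G.Braided] : (F.prod G).Braided where
  braided X Y := by ext <;> simp

end Product

section Symmetric

variable {C : Type*} [Category C] [MonoidalCategory C] [SymmetricCategory C]

open BraidedCategory in
lemma SymmetricCategory.tensorμ_braiding (X₁ X₂ Y₁ Y₂ : C) :
    tensorμ X₁ X₂ Y₁ Y₂ ≫ ((β_ X₁ Y₁).hom ⊗ₘ (β_ X₂ Y₂).hom) =
      (β_ (X₁ ⊗ X₂) (Y₁ ⊗ Y₂)).hom ≫ tensorμ Y₁ Y₂ X₁ X₂ := by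
  calc
    _ = 𝟙 _ ⊗≫ X₁ ◁ (β_ X₂ Y₁).hom ▷ Y₂ ⊗≫
        ((β_ X₁ Y₁).hom ▷ (X₂ ⊗ Y₂) ≫ (Y₁ ⊗ X₁) ◁ (β_ X₂ Y₂).hom) ⊗≫ 𝟙 _ := by
      rw [MonoidalCategory.tensorHom_def]; dsimp [tensorμ]; monoidal
    _ = 𝟙 _ ⊗≫ X₁ ◁ (β_ X₂ Y₁).hom ▷ Y₂ ⊗≫
        ((X₁ ⊗ Y₁) ◁ (β_ X₂ Y₂).hom ≫ (β_ X₁ Y₁).hom ▷ (Y₂ ⊗ X₂)) ⊗≫ 𝟙 _ := by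
      rw [← whisker_exchange]
    -- the symmetry `β_ Y₂ X₁ ∘ β_ X₁ Y₂ = 𝟙` is inserted so that both hexagons apply
    _ = 𝟙 _ ⊗≫ X₁ ◁ (β_ X₂ Y₁).hom ▷ Y₂ ⊗≫ X₁ ◁ Y₁ ◁ (β_ X₂ Y₂).hom ⊗≫
        (β_ X₁ Y₁).hom ▷ Y₂ ▷ X₂ ⊗≫
        Y₁ ◁ ((β_ X₁ Y₂).hom ≫ (β_ Y₂ X₁).hom) ▷ X₂ ⊗≫ 𝟙 _ := by
      rw [SymmetricCategory.symmetry]; monoidal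
    _ = _ := by
      rw [braiding_tensor_left_hom, braiding_tensor_right_hom, braiding_tensor_right_hom]
      dsimp [tensorμ]; monoidal

instance Functor.Braided.tensor : (tensor C).Braided where
  braided X Y := by
    simpa using SymmetricCategory.tensorμ_braiding X.1 X.2 Y.1 Y.2

end Symmetric

end CategoryTheory

section PowFunctor

variable (C : Type*) [Category C] [MonoidalCategory C]

instance powFunctor.monoidalZero : (powFunctor C 0).Monoidal :=
  Functor.CoreMonoidal.toMonoidal
    { εIso := Iso.refl _
      μIso := fun _ _ => λ_ (𝟙_ C)
      μIso_hom_natural_left := fun _ _ => by simp [powFunctor]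
      μIso_hom_natural_right := fun _ _ => by simp [powFunctor]
      associativity := fun _ _ _ => by simp [powFunctor, unitors_equal]
      left_unitality := fun _ => by simp [powFunctor]
      right_unitality := fun _ => by simp [powFunctor, unitors_equal] }

instance powFunctor.braidedZero [BraidedCategory C] : (powFunctor C 0).Braided where
  braided _ _ := by
    change (λ_ (𝟙_ C)).hom ≫ 𝟙 (𝟙_ C) = (β_ (𝟙_ C) (𝟙_ C)).hom ≫ (λ_ (𝟙_ C)).hom
    rw [braiding_tensorUnit_right, ← unitors_equal]
    simp

end PowFunctor

/-- The `k`-th tensor power functor on a symmetric monoidal category admits the structure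
of a strong symmetric (braided) monoidal functor. -/
theorem powFunctor_braided (C : Type*) [Category C] [MonoidalCategory C]
    [SymmetricCategory C] (k : ℕ) :
    Nonempty ((powFunctor C k).Braided) := by
  induction k with
  | zero => exact ⟨inferInstance⟩
  | succ j ih =>
    obtain ⟨_⟩ := ih
    exact ⟨inferInstanceAs (Functor.diag C ⋙ (powFunctor C j).prod (𝟭 C) ⋙ tensor C).Braided⟩
end
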